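/- Let ν be the self-similar measure for the IFS {τ_d(x) = (-1)^d ρ(x+d)}_{d∈{-n,...,n}} with equal weights, 0<ρ<1, n ∈ ℕ⁺. Then ν̂(t) = e^{-2πi n t ρ/(1-ρ)} · μ̂_{ρ,D_{2n+1}}(t), where μ_{ρ,D_{2n+1}} is the standard self-similar measure for {x ↦ ρ(x+d)}_{d=0}^{2n} with equal weights. -/

import Mathlib

/-!
Let `ψ`, `φ` be the characteristic functions of `ν`, `μ`. Self-similarity gives
`ψ s = avg_{|d| ≤ n} e^{i(-1)^d ρ d s} ψ((-1)^d ρ s)` and `φ s = avg_{0 ≤ d ≤ 2n} e^{iρds} φ(ρs)`.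
A function continuous at `0`, vanishing there, whose norm at `s` is dominated by its norms at
`±ρs` vanishes identically (iterate towards `0`). Applied to `ψ s - ψ (-s)` this shows that `ψ`
is even, so that `ψ s = M(ρs) ψ(ρs)` with the symmetric mask `M x = avg_{|j| ≤ n} e^{ijx}`.
Since `c = nρ/(1-ρ)` solves `c = ρ(c + n)`, the modulation `e^{-ics} φ s` recentres the digits
`{0, …, 2n}` at `{-n, …, n}` and satisfies the same equation; the same argument applied to the
difference gives `ψ s = e^{-ics} φ s`.
-/

open MeasureTheory Complex Finset Filter Topology
open scoped ENNReal

lemma charFun_smul_measure {E : Type*} [MeasurableSpace E] [SeminormedAddCommGroup E]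
    [InnerProductSpace ℝ E] (w : ℝ≥0∞) (μ : Measure E) (t : E) :
    charFun (w • μ) t = w.toReal * charFun μ t := by
  simp [charFun_apply, integral_smul_measure, Complex.real_smul]

lemma charFun_finsetSum_measure {E ι : Type*} [MeasurableSpace E] [NormedAddCommGroup E]
    [InnerProductSpace ℝ E] [OpensMeasurableSpace E] (s : Finset ι) (μ : ι → Measure E)
    [∀ i, IsFiniteMeasure (μ i)] (t : E) :
    charFun (∑ i ∈ s, μ i) t = ∑ i ∈ s, charFun (μ i) t := by
  simp only [charFun_eq_integral_innerProbChar]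
  exact integral_finsetSum_measure fun i _ ↦
    (BoundedContinuousFunction.innerProbChar t).integrable (μ i)

lemma charFun_map_mul_add (μ : Measure ℝ) (a b t : ℝ) :
    charFun (μ.map fun x ↦ a * (x + b)) t = cexp (↑(a * b * t) * I) * charFun μ (a * t) := by
  rw [charFun_map_mul_comp (by fun_prop), charFun_map_add_const]
  simp [mul_comm, mul_left_comm]

lemma charFun_eq_of_selfSimilar {ι : Type*} (s : Finset ι) (w : ℝ≥0∞) (a b : ι → ℝ)
    {μ : Measure ℝ} [IsFiniteMeasure μ]
    (hμ : μ = w • ∑ i ∈ s, μ.map fun x ↦ a i * (x + b i)) (t : ℝ) :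
    charFun μ t = w.toReal * ∑ i ∈ s, cexp (↑(a i * b i * t) * I) * charFun μ (a i * t) := by
  conv_lhs => rw [hμ]
  simp only [charFun_smul_measure, charFun_finsetSum_measure, charFun_map_mul_add]

lemma integral_exp_two_pi_I_mul_eq_charFun (μ : Measure ℝ) (t : ℝ) :
    ∫ x, cexp (2 * (Real.pi : ℂ) * I * t * x) ∂μ = charFun μ (2 * Real.pi * t) := by
  rw [charFun_apply_real]
  congr with x
  push_cast
  ring_nf

lemma norm_inv_card_mul_sum_le {ι : Type*} {s : Finset ι} (hs : s.Nonempty) {u F : ι → ℂ}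
    {M : ℝ} (hu : ∀ i ∈ s, ‖u i‖ ≤ 1) (hF : ∀ i ∈ s, ‖F i‖ ≤ M) :
    ‖(#s : ℂ)⁻¹ * ∑ i ∈ s, u i * F i‖ ≤ M := by
  have hcard : (0 : ℝ) < #s := by exact_mod_cast hs.card_pos
  have hsum : ‖∑ i ∈ s, u i * F i‖ ≤ #s * M := by
    refine (norm_sum_le _ _).trans ?_
    rw [← nsmul_eq_mul, ← sum_const]
    refine sum_le_sum fun i hi ↦ ?_
    rw [norm_mul]
    exact (mul_le_of_le_one_left (norm_nonneg _) (hu i hi)).trans (hF i hi)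
  rwa [norm_mul, norm_inv, norm_natCast, inv_mul_le_iff₀ hcard]

lemma eq_zero_of_norm_le_max_norm_mul {E : Type*} [NormedAddCommGroup E] {h : ℝ → E} {ρ : ℝ}
    (hρ : |ρ| < 1) (hc : ContinuousAt h 0) (h0 : h 0 = 0)
    (hle : ∀ s, ‖h s‖ ≤ max ‖h (ρ * s)‖ ‖h (-(ρ * s))‖) : h = 0 := by
  set k : ℝ → ℝ := fun s ↦ max ‖h s‖ ‖h (-s)‖
  have hk : ∀ s, k s ≤ k (ρ * s) := fun s ↦ by
    refine max_le (hle s) ?_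
    simpa [k, max_comm] using hle (-s)
  have hk_iter : ∀ s (j : ℕ), k s ≤ k (ρ ^ j * s) := fun s j ↦ by
    induction j with
    | zero => simp
    | succ j ih => exact ih.trans ((hk _).trans_eq (by ring_nf))
  have hkc : ContinuousAt k 0 :=
    hc.norm.max (hc.comp_of_eq continuous_neg.continuousAt neg_zero).norm
  ext s
  have hlim : Tendsto (fun j : ℕ ↦ k (ρ ^ j * s)) atTop (𝓝 0) := by
    have hpow := (tendsto_pow_atTop_nhds_zero_of_abs_lt_one hρ).mul_const s
    rw [zero_mul] at hpow
    simpa [k, h0, Function.comp_def] using hkc.tendsto.comp hpow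
  have hks : k s ≤ 0 := ge_of_tendsto hlim (Eventually.of_forall (hk_iter s))
  simpa using (le_max_left _ _).trans hks

lemma eq_of_forall_eq_mul_comp_mul {f g m : ℝ → ℂ} {ρ : ℝ} (hρ : |ρ| < 1)
    (hm : ∀ x, ‖m x‖ ≤ 1) (hf : ∀ s, f s = m (ρ * s) * f (ρ * s))
    (hg : ∀ s, g s = m (ρ * s) * g (ρ * s)) (hfc : ContinuousAt f 0) (hgc : ContinuousAt g 0)
    (h0 : f 0 = g 0) : f = g := by
  rw [← sub_eq_zero]
  refine eq_zero_of_norm_le_max_norm_mul hρ (hfc.sub hgc) (by simp [h0])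
    fun s ↦ le_max_of_le_left ?_
  calc ‖(f - g) s‖ = ‖m (ρ * s)‖ * ‖(f - g) (ρ * s)‖ := by
        rw [Pi.sub_apply, hf, hg, ← mul_sub, norm_mul, Pi.sub_apply]
    _ ≤ ‖(f - g) (ρ * s)‖ := mul_le_of_le_one_left (norm_nonneg _) (hm _)

lemma neg_one_zpow_neg {α : Type*} [DivisionRing α] (d : ℤ) : (-1 : α) ^ (-d) = (-1) ^ d := by
  rw [← inv_zpow', inv_neg_one]

lemma neg_one_zpow_mul_eq_or {α : Type*} [DivisionRing α] (d : ℤ) (x : α) :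
    (-1) ^ d * x = x ∨ (-1) ^ d * x = -x := by
  rcases Int.even_or_odd d with h | h
  · simp [h.neg_one_zpow]
  · simp [h.neg_one_zpow]

lemma card_Icc_neg_self (n : ℕ) : #(Icc (-(n : ℤ)) n) = 2 * n + 1 := by
  rw [Int.card_Icc]; omega

lemma natCast_card_Icc_neg_self {R : Type*} [Semiring R] (n : ℕ) :
    (#(Icc (-(n : ℤ)) n) : R) = 2 * n + 1 := by
  rw [card_Icc_neg_self]; push_cast; rfl

section
variable {M : Type*} [AddCommMonoid M] (n : ℕ)

lemma sum_Icc_neg_self_comp_neg (f : ℤ → M) :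
    ∑ d ∈ Icc (-(n : ℤ)) n, f (-d) = ∑ d ∈ Icc (-(n : ℤ)) n, f d :=
  sum_nbij' Neg.neg Neg.neg (by simp; omega) (by simp; omega) (by simp) (by simp) (by simp)

lemma sum_Icc_neg_self_neg_one_zpow_mul (g : ℝ → M) :
    ∑ d ∈ Icc (-(n : ℤ)) n, g ((-1) ^ d * d) = ∑ d ∈ Icc (-(n : ℤ)) n, g d := by
  let σ : ℤ → ℤ := fun d ↦ if Even d then d else -d
  have hσ : ∀ d : ℤ, ((σ d : ℤ) : ℝ) = (-1) ^ d * d := fun d ↦ by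
    rcases Int.even_or_odd d with h | h
    · simp [σ, h, h.neg_one_zpow]
    · simp [σ, Int.not_even_iff_odd.2 h, h.neg_one_zpow]
  have hσσ : ∀ d, σ (σ d) = d := fun d ↦ by by_cases h : Even d <;> simp [σ, h]
  have hmem : ∀ d ∈ Icc (-(n : ℤ)) n, σ d ∈ Icc (-(n : ℤ)) n := fun d hd ↦ by
    simp only [mem_Icc, σ] at hd ⊢; split_ifs <;> omega
  simp_rw [← hσ]
  exact sum_nbij' σ σ hmem hmem (fun d _ ↦ hσσ d) (fun d _ ↦ hσσ d) (fun _ _ ↦ rfl)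

lemma sum_range_sub_eq_sum_Icc (f : ℤ → M) :
    ∑ d ∈ range (2 * n + 1), f (d - n) = ∑ j ∈ Icc (-(n : ℤ)) n, f j :=
  sum_nbij' (fun d ↦ (d : ℤ) - n) (fun j ↦ (j + n).toNat) (by simp; omega) (by simp; omega)
    (by simp) (by simp; omega) (by simp)

end

/-- `symmetricMask n (2πx) = e^{-2πinx} m_{D_{2n+1}}(x)`. -/
noncomputable def symmetricMask (n : ℕ) (x : ℝ) : ℂ :=
  (2 * n + 1 : ℂ)⁻¹ * ∑ j ∈ Icc (-(n : ℤ)) n, cexp (↑(j * x) * I)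

lemma norm_symmetricMask_le_one (n : ℕ) (x : ℝ) : ‖symmetricMask n x‖ ≤ 1 := by
  have := norm_inv_card_mul_sum_le (s := Icc (-(n : ℤ)) n) (nonempty_Icc.2 (by omega))
    (u := fun j ↦ cexp (↑(j * x) * I)) (F := fun _ ↦ 1) (M := 1)
    (fun j _ ↦ (norm_exp_ofReal_mul_I _).le) (fun _ _ ↦ by simp)
  rw [natCast_card_Icc_neg_self] at this
  simpa only [symmetricMask, mul_one] using this

section
variable {n : ℕ} {ρ : ℝ}

lemma even_of_eq_signed_average {ψ : ℝ → ℂ} (hρ : |ρ| < 1) (hc : ContinuousAt ψ 0)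
    (hψ : ∀ s, ψ s = (2 * n + 1 : ℂ)⁻¹ *
      ∑ d ∈ Icc (-(n : ℤ)) n, cexp (↑((-1) ^ d * ρ * d * s) * I) * ψ ((-1) ^ d * ρ * s)) :
    Function.Even ψ := by
  set h : ℝ → ℂ := fun s ↦ ψ s - ψ (-s)
  -- `d ↦ -d` turns the equation for `ψ (-s)` into one with the same characters as that for `ψ s`.
  have hrepr : ∀ s, h s = (#(Icc (-(n : ℤ)) n) : ℂ)⁻¹ *
      ∑ d ∈ Icc (-(n : ℤ)) n, cexp (↑((-1) ^ d * ρ * d * s) * I) * h ((-1) ^ d * ρ * s) := by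
    intro s
    have hneg := hψ (-s)
    rw [← sum_Icc_neg_self_comp_neg] at hneg
    simp only [h]
    rw [natCast_card_Icc_neg_self, hψ s, hneg, ← mul_sub, ← sum_sub_distrib]
    refine congrArg _ (sum_congr rfl fun d _ ↦ ?_)
    have hexp : (-1) ^ d * ρ * ((-d : ℤ) : ℝ) * -s = (-1) ^ d * ρ * d * s := by push_cast; ring
    rw [neg_one_zpow_neg, hexp, mul_neg, mul_sub]
  have hle : ∀ s, ‖h s‖ ≤ max ‖h (ρ * s)‖ ‖h (-(ρ * s))‖ := fun s ↦ by
    rw [hrepr]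
    refine norm_inv_card_mul_sum_le (nonempty_Icc.2 (by omega))
      (fun d _ ↦ (norm_exp_ofReal_mul_I _).le) fun d _ ↦ ?_
    rcases neg_one_zpow_mul_eq_or d (ρ * s) with hd | hd <;> simp [mul_assoc, hd]
  have h0 := eq_zero_of_norm_le_max_norm_mul hρ
    (hc.sub (hc.comp_of_eq continuous_neg.continuousAt neg_zero)) (by simp) hle
  exact fun s ↦ (sub_eq_zero.1 (congrFun h0 s)).symm

lemma eq_symmetricMask_mul_of_even {ψ : ℝ → ℂ}
    (hψ : ∀ s, ψ s = (2 * n + 1 : ℂ)⁻¹ *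
      ∑ d ∈ Icc (-(n : ℤ)) n, cexp (↑((-1) ^ d * ρ * d * s) * I) * ψ ((-1) ^ d * ρ * s))
    (heven : Function.Even ψ) (s : ℝ) : ψ s = symmetricMask n (ρ * s) * ψ (ρ * s) := by
  have hsign : ∀ d : ℤ, ψ ((-1) ^ d * ρ * s) = ψ (ρ * s) := fun d ↦ by
    rcases neg_one_zpow_mul_eq_or d (ρ * s) with hd | hd <;> simp only [mul_assoc, hd, heven (ρ * s)]
  rw [hψ, symmetricMask, mul_assoc, sum_mul]
  simp_rw [hsign]
  rw [← sum_Icc_neg_self_neg_one_zpow_mul n fun x ↦ cexp (↑(x * (ρ * s)) * I) * ψ (ρ * s)]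
  congr 2 with d
  ring_nf

lemma modulated_eq_symmetricMask_mul {φ : ℝ → ℂ} (hρ : ρ ≠ 1)
    (hφ : ∀ s, φ s = (2 * n + 1 : ℂ)⁻¹ *
      ∑ d ∈ range (2 * n + 1), cexp (↑(ρ * d * s) * I) * φ (ρ * s)) (s : ℝ) :
    cexp (↑(-(n * ρ / (1 - ρ) * s)) * I) * φ s =
      symmetricMask n (ρ * s) * (cexp (↑(-(n * ρ / (1 - ρ) * (ρ * s))) * I) * φ (ρ * s)) := by
  have hc : n * ρ / (1 - ρ) * (1 - ρ) = n * ρ := div_mul_cancel₀ _ (sub_ne_zero.2 hρ.symm)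
  rw [hφ, symmetricMask, ← sum_range_sub_eq_sum_Icc, mul_left_comm, mul_assoc, mul_sum, sum_mul]
  congr 1
  refine sum_congr rfl fun d _ ↦ ?_
  have hexp : cexp (↑(-(n * ρ / (1 - ρ) * s)) * I) * cexp (↑(ρ * d * s) * I) =
      cexp (↑(((d - n : ℤ) : ℝ) * (ρ * s)) * I) *
        cexp (↑(-(n * ρ / (1 - ρ) * (ρ * s))) * I) := by
    rw [← Complex.exp_add, ← Complex.exp_add, ← add_mul, ← add_mul, ← ofReal_add, ← ofReal_add]
    congr 3
    push_cast
    linear_combination (-s) * hc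
  linear_combination φ (ρ * s) * hexp

end

theorem ft_symmetric_factorization_general (n : ℕ) (ρ : ℝ)
    (hρ : ρ ∈ Set.Ioo (0 : ℝ) 1)
    (ν μ : Measure ℝ) [IsProbabilityMeasure ν] [IsProbabilityMeasure μ]
    (hν : ν = (2 * n + 1 : ℝ≥0∞)⁻¹ • ∑ d ∈ Finset.Icc (-(n : ℤ)) (n : ℤ),
      Measure.map (fun x : ℝ => (-1 : ℝ) ^ d * ρ * (x + (d : ℝ))) ν)
    (hμ : μ = (2 * n + 1 : ℝ≥0∞)⁻¹ • ∑ d ∈ Finset.range (2 * n + 1),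
      Measure.map (fun x : ℝ => ρ * (x + (d : ℝ))) μ) :
    ∀ t : ℝ, (∫ x, Complex.exp (2 * (Real.pi : ℂ) * Complex.I * (t : ℂ) * (x : ℂ)) ∂ν)
      = Complex.exp (-(2 * (Real.pi : ℂ) * Complex.I * (n : ℂ) * (t : ℂ) * (ρ : ℂ)) / (1 - (ρ : ℂ))) *
        ∫ x, Complex.exp (2 * (Real.pi : ℂ) * Complex.I * (t : ℂ) * (x : ℂ)) ∂μ := by
  intro t
  have hρ' : |ρ| < 1 := abs_lt.2 ⟨by linarith [hρ.1], hρ.2⟩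
  have hw : (((2 * n + 1 : ℝ≥0∞)⁻¹).toReal : ℂ) = (2 * n + 1 : ℂ)⁻¹ := by
    rw [ENNReal.toReal_inv, show (2 * n + 1 : ℝ≥0∞) = ((2 * n + 1 : ℕ) : ℝ≥0∞) by push_cast; rfl,
      ENNReal.toReal_natCast]
    push_cast; rfl
  have hψ := charFun_eq_of_selfSimilar _ _ _ _ hν
  have hφ := charFun_eq_of_selfSimilar _ _ _ _ hμ
  rw [hw] at hψ hφ
  have hνμ : charFun ν = fun s ↦ cexp (↑(-(n * ρ / (1 - ρ) * s)) * I) * charFun μ s :=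
    eq_of_forall_eq_mul_comp_mul hρ' (norm_symmetricMask_le_one n)
      (eq_symmetricMask_mul_of_even hψ (even_of_eq_signed_average hρ' (by fun_prop) hψ))
      (modulated_eq_symmetricMask_mul hρ.2.ne hφ) (by fun_prop) (by fun_prop) (by simp)
  rw [integral_exp_two_pi_I_mul_eq_charFun, integral_exp_two_pi_I_mul_eq_charFun, hνμ]
  dsimp only
  congr 2
  push_cast
  field_simp

/-- for the self-similar measure `ν` of the IFS
`{τ_d(x) = (-1)^d ρ(x+d)}_{d ∈ {-n,...,n}}` (equal weights) and the standard self-similar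
measure `μ` of `{x ↦ ρ(x+d)}_{d=0}^{2n}` (equal weights),
`ν̂(t) = e^{-2πi n t ρ/(1-ρ)} μ̂(t)` for all `t`. -/
theorem ft_symmetric_factorization (n : ℕ) (hn : 0 < n) (ρ : ℝ)
    (hρ : ρ ∈ Set.Ioo (0 : ℝ) 1)
    (ν μ : Measure ℝ) [IsProbabilityMeasure ν] [IsProbabilityMeasure μ]
    (hν : ν = (2 * n + 1 : ℝ≥0∞)⁻¹ • ∑ d ∈ Finset.Icc (-(n : ℤ)) (n : ℤ),
      Measure.map (fun x : ℝ => (-1 : ℝ) ^ d * ρ * (x + (d : ℝ))) ν)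
    (hμ : μ = (2 * n + 1 : ℝ≥0∞)⁻¹ • ∑ d ∈ Finset.range (2 * n + 1),
      Measure.map (fun x : ℝ => ρ * (x + (d : ℝ))) μ) :
    ∀ t : ℝ, (∫ x, Complex.exp (2 * (Real.pi : ℂ) * Complex.I * (t : ℂ) * (x : ℂ)) ∂ν)
      = Complex.exp (-(2 * (Real.pi : ℂ) * Complex.I * (n : ℂ) * (t : ℂ) * (ρ : ℂ)) / (1 - (ρ : ℂ))) *
        ∫ x, Complex.exp (2 * (Real.pi : ℂ) * Complex.I * (t : ℂ) * (x : ℂ)) ∂μ :=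
  ft_symmetric_factorization_general n ρ hρ ν μ hν hμ
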